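/- (Tightness of lower bound.) Let X = {x₁, x₂}, and let F = {D : X × [m] → [−1,1]} be the class of all functions bounded in [−1,1]. Then d_F(P,Q) = ‖(P−Q)({x₁},·)‖₁ + ‖(P−Q)({x₂},·)‖₁, and for any invertible row-stochastic C there exist distributions P, Q on X × [m] with P ≠ Q such that d_F(P̃, Q̃) = d_F(P, Q), where P̃, Q̃ are the label-corrupted versions. -/
import Mathlib


open Finset

/-- `P` is a probability distribution on `Fin 2 × Fin m`. -/
def IsProbDist {m : ℕ} (P : Fin 2 → Fin m → ℝ) : Prop :=
  (∀ x y, 0 ≤ P x y) ∧ ∑ x, ∑ y, P x y = 1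

/-- Corruption of the label through a noisy channel `C`. -/
noncomputable def corrupt {m : ℕ} (P : Fin 2 → Fin m → ℝ)
    (C : Matrix (Fin m) (Fin m) ℝ) : Fin 2 → Fin m → ℝ :=
  fun x yt => ∑ y, P x y * C y yt

/-- `C` is a row-stochastic matrix. -/
def RowStochastic {m : ℕ} (C : Matrix (Fin m) (Fin m) ℝ) : Prop :=
  (∀ i j, 0 ≤ C i j) ∧ ∀ i, ∑ j, C i j = 1

/-- The class of all functions `Fin 2 × Fin m → [−1,1]`. -/
def boundedClass (m : ℕ) : Set (Fin 2 → Fin m → ℝ) :=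
  {D | ∀ x y, D x y ∈ Set.Icc (-1 : ℝ) 1}

/-- IPM neural network distance. -/
noncomputable def nnDist {m : ℕ}
    (F : Set (Fin 2 → Fin m → ℝ)) (P Q : Fin 2 → Fin m → ℝ) : ℝ :=
  sSup ((fun D => (∑ x, ∑ y, P x y * D x y) - ∑ x, ∑ y, Q x y * D x y) '' F)

lemma nnDist_eq_l1 {m : ℕ} (P Q : Fin 2 → Fin m → ℝ) :
    nnDist (boundedClass m) P Q = ∑ x, ∑ y, |P x y - Q x y| := by
  have hrw : ∀ D : Fin 2 → Fin m → ℝ,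
      (∑ x, ∑ y, P x y * D x y) - ∑ x, ∑ y, Q x y * D x y
        = ∑ x, ∑ y, (P x y - Q x y) * D x y := by
    intro D
    rw [← Finset.sum_sub_distrib]
    refine Finset.sum_congr rfl fun x _ => ?_
    rw [← Finset.sum_sub_distrib]
    exact Finset.sum_congr rfl fun y _ => by ring
  have key : IsGreatest
      ((fun D => (∑ x, ∑ y, P x y * D x y) - ∑ x, ∑ y, Q x y * D x y) '' boundedClass m)
      (∑ x, ∑ y, |P x y - Q x y|) := by
    constructor
    · refine ⟨fun x y => if 0 ≤ P x y - Q x y then 1 else -1, fun x y => ?_, ?_⟩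
      · dsimp; split <;> simp
      · dsimp only
        rw [hrw]
        refine Finset.sum_congr rfl fun x _ => Finset.sum_congr rfl fun y _ => ?_
        by_cases h : 0 ≤ P x y - Q x y
        · simp [h, abs_of_nonneg h]
        · simp [h, abs_of_neg (lt_of_not_ge h)]
    · rintro r ⟨D, hD, rfl⟩
      dsimp only
      rw [hrw]
      refine Finset.sum_le_sum fun x _ => Finset.sum_le_sum fun y _ => ?_
      calc (P x y - Q x y) * D x y ≤ |(P x y - Q x y) * D x y| := le_abs_self _
        _ = |P x y - Q x y| * |D x y| := abs_mul _ _
        _ ≤ |P x y - Q x y| * 1 := by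
            refine mul_le_mul_of_nonneg_left ?_ (abs_nonneg _)
            exact abs_le.2 ⟨(hD x y).1, (hD x y).2⟩
        _ = |P x y - Q x y| := mul_one _
  exact key.csSup_eq

theorem nnDist_boundedClass_tight_lower_bound {m : ℕ} (hm : 0 < m) :
    (∀ P Q : Fin 2 → Fin m → ℝ, IsProbDist P → IsProbDist Q →
      nnDist (boundedClass m) P Q =
        (∑ y, |P 0 y - Q 0 y|) + ∑ y, |P 1 y - Q 1 y|) ∧
    (∀ C Cinv : Matrix (Fin m) (Fin m) ℝ, RowStochastic C →
      C * Cinv = 1 → Cinv * C = 1 →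
      ∃ P Q : Fin 2 → Fin m → ℝ, IsProbDist P ∧ IsProbDist Q ∧ P ≠ Q ∧
        nnDist (boundedClass m) (corrupt P C) (corrupt Q C) =
          nnDist (boundedClass m) P Q) := by
  have hm' : (0:ℝ) < m := by exact_mod_cast hm
  constructor
  · intro P Q _ _
    rw [nnDist_eq_l1, Fin.sum_univ_two]
  · intro C Cinv hC _ _
    set P : Fin 2 → Fin m → ℝ := fun x _ => (if x = 0 then 3 else 1) / (4 * m) with hPdef
    set Q : Fin 2 → Fin m → ℝ := fun x _ => (if x = 0 then 1 else 3) / (4 * m) with hQdef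
    have hsum : ∀ R : Fin 2 → Fin m → ℝ,
        (∀ x y, R x y = (if x = 0 then (3:ℝ) else 1) / (4*m) ∨
                 R x y = (if x = 0 then (1:ℝ) else 3) / (4*m)) → True := fun _ _ => trivial
    refine ⟨P, Q, ⟨?_, ?_⟩, ⟨?_, ?_⟩, ?_, ?_⟩
    · intro x y; simp only [hPdef]; split <;> positivity
    · simp only [hPdef, Finset.sum_const, card_univ, Fintype.card_fin, nsmul_eq_mul,
        Fin.sum_univ_two]
      simp only [show ((0:Fin 2) = 0) = True by simp, show ((1:Fin 2) = 0) = False by simp,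
        if_true, if_false]
      field_simp
      ring
    · intro x y; simp only [hQdef]; split <;> positivity
    · simp only [hQdef, Finset.sum_const, card_univ, Fintype.card_fin, nsmul_eq_mul,
        Fin.sum_univ_two]
      simp only [show ((0:Fin 2) = 0) = True by simp, show ((1:Fin 2) = 0) = False by simp,
        if_true, if_false]
      field_simp
      ring
    · intro h
      have h0 := congrFun (congrFun h 0) ⟨0, hm⟩
      simp only [hPdef, hQdef, if_true] at h0
      have h2 : (2:ℝ)/(4*m) = 0 := by
        have h3 : (3:ℝ)/(4*m) - 1/(4*m) = 2/(4*m) := by ring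
        linarith
      have h3 : (0:ℝ) < 2/(4*m) := by positivity
      linarith
    · rw [nnDist_eq_l1, nnDist_eq_l1]
      have hdiff : ∀ x y, P x y - Q x y = (if x = 0 then (1:ℝ) else -1) / (2 * m) := by
        intro x y
        fin_cases x <;> simp only [hPdef, hQdef] <;> norm_num <;> field_simp <;> ring
      have habs : ∀ x y, |P x y - Q x y| = 1 / (2 * m) := by
        intro x y
        rw [hdiff x y]
        split
        · rw [abs_of_nonneg (by positivity)]
        · rw [show (-1:ℝ)/(2*m) = -(1/(2*m)) by ring, abs_neg, abs_of_nonneg (by positivity)]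
      have hcd : ∀ x yt, corrupt P C x yt - corrupt Q C x yt
          = ((if x = 0 then (1:ℝ) else -1) / (2 * m)) * ∑ y, C y yt := by
        intro x yt
        simp only [corrupt]
        rw [← Finset.sum_sub_distrib, Finset.mul_sum]
        refine Finset.sum_congr rfl fun y _ => ?_
        rw [← sub_mul, hdiff x y]
      have hcolsum : ∀ yt, 0 ≤ ∑ y, C y yt := fun yt =>
        Finset.sum_nonneg fun y _ => hC.1 y yt
      have habscd : ∀ x yt, |corrupt P C x yt - corrupt Q C x yt|
          = (1 / (2 * m)) * ∑ y, C y yt := by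
        intro x yt
        rw [hcd x yt, abs_mul, abs_of_nonneg (hcolsum yt)]
        congr 1
        split
        · rw [abs_of_nonneg (by positivity)]
        · rw [show (-1:ℝ)/(2*m) = -(1/(2*m)) by ring, abs_neg, abs_of_nonneg (by positivity)]
      have htot : ∑ yt, ∑ y, C y yt = (m : ℝ) := by
        rw [Finset.sum_comm]
        simp [hC.2]
      calc ∑ x, ∑ yt, |corrupt P C x yt - corrupt Q C x yt|
          = ∑ x : Fin 2, (1 / (2 * (m:ℝ))) * ∑ yt, ∑ y, C y yt := by
            refine Finset.sum_congr rfl fun x _ => ?_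
            rw [Finset.mul_sum]
            exact Finset.sum_congr rfl fun yt _ => habscd x yt
        _ = ∑ x : Fin 2, ∑ y : Fin m, (1 / (2 * (m:ℝ))) := by
            refine Finset.sum_congr rfl fun x _ => ?_
            rw [htot]
            simp [Finset.sum_const]
            ring
        _ = ∑ x, ∑ y, |P x y - Q x y| := by
            refine Finset.sum_congr rfl fun x _ => Finset.sum_congr rfl fun y _ => ?_
            rw [habs x y]
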